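/- arXiv:2409.08249 — 2 statements merged into one kernel-verified Lean document; each statement's English description precedes it below -/
import Mathlib

section
/- Let R₁, …, R_m, R' be scalar residuals and for x ∈ R define the empirical distribution function F_∞(x) = (1/(m+1)) · |{ i ≤ m : R_i ≤ x }| (treating the (m+1)-th residual as +∞, which contributes 0 to F_∞ for finite x). Let q̂ = inf{ x : F_∞(x) ≥ 1-α } with α ∈ (0,1) and α(m+1) ≥ 1. If the random vector (R₁,…,R_m,R') is exchangeable and the residuals are almost surely distinct, then P(R' ≤ q̂) ≥ 1 - α. -/
open MeasureTheory ProbabilityTheory Finset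
open scoped ENNReal

/-!
Put `Y = (R₁, …, R_m, R')` and `k = ⌈(1 - α)(m + 1)⌉`. Since the coordinates of `Y` are a.s.
distinct, their ranks are a.s. a permutation of `1, …, m + 1`, so exactly `k` coordinates have
rank at most `k`. By exchangeability every coordinate has the same probability of this event,
which is therefore `k / (m + 1) ≥ 1 - α`. Finally, if `R'` has rank at most `k`, fewer than `k`
calibration residuals lie below `R'`, while at least `k` of them lie below any `x` with
`F_∞(x) ≥ 1 - α`; hence `R' ≤ q̂`.
-/

namespace Function

variable {ι α : Type*} [Fintype ι] [LinearOrder α]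

def rank (v : ι → α) (j : ι) : ℕ := #{i | v i ≤ v j}

lemma rank_comp_perm (v : ι → α) (σ : Equiv.Perm ι) (j : ι) :
    (v ∘ σ).rank j = v.rank (σ j) :=
  card_equiv σ (by simp)

lemma one_le_rank (v : ι → α) (j : ι) : 1 ≤ v.rank j :=
  card_pos.mpr ⟨j, by simp⟩

lemma rank_le_card (v : ι → α) (j : ι) : v.rank j ≤ Fintype.card ι :=
  (card_filter_le _ _).trans_eq card_univ

lemma Injective.rank_injective {v : ι → α} (hv : Injective v) : Injective v.rank := by
  suffices h : ∀ i j, v i ≤ v j → v.rank i = v.rank j → i = j by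
    intro i j hij
    rcases le_total (v i) (v j) with hle | hle
    exacts [h i j hle hij, (h j i hle hij.symm).symm]
  intro i j hle hij
  have hsub : ({a | v a ≤ v i} : Finset ι) ⊆ ({a | v a ≤ v j} : Finset ι) :=
    monotone_filter_right _ fun a _ ha => ha.trans hle
  have hj : j ∈ ({a | v a ≤ v i} : Finset ι) := by
    rw [eq_of_subset_of_card_le hsub hij.ge]; simp
  exact hv (hle.antisymm (mem_filter.mp hj).2)

lemma Injective.image_rank {v : ι → α} (hv : Injective v) :
    univ.image v.rank = Icc 1 (Fintype.card ι) :=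
  eq_of_subset_of_card_le
    (fun _ h => by
      obtain ⟨j, -, rfl⟩ := mem_image.mp h
      exact mem_Icc.mpr ⟨one_le_rank v j, rank_le_card v j⟩)
    (by simp [card_image_of_injective _ hv.rank_injective])

lemma Injective.card_rank_le {v : ι → α} (hv : Injective v) {k : ℕ} (hk : k ≤ Fintype.card ι) :
    #{j | v.rank j ≤ k} = k := by
  calc #{j | v.rank j ≤ k}
      = #(({j | v.rank j ≤ k} : Finset ι).image v.rank) :=
        (card_image_of_injective _ hv.rank_injective).symm
    _ = #{a ∈ Icc 1 (Fintype.card ι) | a ≤ k} := by rw [← hv.image_rank, filter_image]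
    _ = #(Icc 1 k) := by congr 1; ext a; simp only [mem_filter, mem_Icc]; omega
    _ = k := by simp

lemma rank_snoc_last {n : ℕ} (v : Fin n → α) (a : α) :
    (Fin.snoc v a : Fin (n + 1) → α).rank (Fin.last n) = #{i | v i ≤ a} + 1 := by
  rw [rank, card_filter, card_filter, Fin.sum_univ_castSucc]
  simp

end Function

/-- The hypothesis `hk` makes the set nonempty, so that `sInf` is not a junk value. -/
lemma le_csInf_of_card_filter_lt {ι α : Type*} [Fintype ι] [ConditionallyCompleteLinearOrder α]
    (r : ι → α) {a : α} {k : ℕ} (hk : k ≤ Fintype.card ι) (ha : #{i | r i ≤ a} < k) :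
    a ≤ sInf {x | k ≤ #{i | r i ≤ x}} := by
  have : Nonempty ι := Fintype.card_pos_iff.mp (by omega)
  obtain ⟨i₀, hi₀⟩ := Finite.exists_max r
  refine le_csInf ⟨r i₀, by simpa [filter_true_of_mem fun i _ => hi₀ i]⟩ fun x hx => ?_
  by_contra! hxa
  have := card_le_card (monotone_filter_right univ fun i _ (hi : r i ≤ x) => hi.trans hxa.le)
  exact (this.trans_lt ha).not_ge hx

lemma le_div_iff_ceil_mul_le {t n : ℝ} (hn : 0 < n) (c : ℕ) : t ≤ c / n ↔ ⌈t * n⌉₊ ≤ c := by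
  rw [le_div_iff₀ hn, Nat.ceil_le]

section Exchangeable

variable {Ω ι α : Type*} [MeasurableSpace Ω] [Fintype ι] [MeasurableSpace α]

def Exchangeable (P : Measure Ω) (Y : Ω → ι → α) : Prop :=
  ∀ σ : Equiv.Perm ι, P.map (fun ω => Y ω ∘ σ) = P.map Y

variable [LinearOrder α] [TopologicalSpace α] [OrderClosedTopology α]
  [SecondCountableTopology α] [OpensMeasurableSpace α] {P : Measure Ω} {Y : Ω → ι → α}

lemma measurable_rank (j : ι) : Measurable fun v : ι → α => v.rank j := by
  simp only [Function.rank, card_filter]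
  exact Finset.measurable_sum _ fun i _ => Measurable.ite
    (measurableSet_le (measurable_pi_apply i) (measurable_pi_apply j)) measurable_const
    measurable_const

lemma measurableSet_rank_le (j : ι) (k : ℕ) : MeasurableSet {v : ι → α | v.rank j ≤ k} :=
  measurable_rank j measurableSet_Iic

lemma Exchangeable.measure_rank_le_eq (hexch : Exchangeable P Y) (hY : Measurable Y)
    (j j' : ι) (k : ℕ) : P {ω | (Y ω).rank j ≤ k} = P {ω | (Y ω).rank j' ≤ k} := by
  classical
  let σ := Equiv.swap j' j
  have hS := measurableSet_rank_le (α := α) j' k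
  calc P {ω | (Y ω).rank j ≤ k} = P.map (fun ω => Y ω ∘ σ) {v | v.rank j' ≤ k} := by
        rw [Measure.map_apply (by fun_prop) hS]
        simp [Function.rank_comp_perm, σ]
    _ = P {ω | (Y ω).rank j' ≤ k} := by rw [hexch σ, Measure.map_apply hY hS]; rfl

lemma sum_measure_rank_le (hY : Measurable Y) (hinj : ∀ᵐ ω ∂P, Function.Injective (Y ω))
    {k : ℕ} (hk : k ≤ Fintype.card ι) :
    ∑ j, P {ω | (Y ω).rank j ≤ k} = k * P Set.univ := by
  have hA : ∀ j, MeasurableSet {ω | (Y ω).rank j ≤ k} := fun j => hY (measurableSet_rank_le j k)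
  calc ∑ j, P {ω | (Y ω).rank j ≤ k}
      = ∑ j, ∫⁻ ω, {ω | (Y ω).rank j ≤ k}.indicator 1 ω ∂P := by
        simp_rw [lintegral_indicator_one (hA _)]
    _ = ∫⁻ ω, ∑ j, {ω | (Y ω).rank j ≤ k}.indicator 1 ω ∂P :=
        (lintegral_finsetSum _ fun j _ => measurable_const.indicator (hA j)).symm
    _ = ∫⁻ _, (k : ℝ≥0∞) ∂P := lintegral_congr_ae <| hinj.mono fun ω hω => by
        conv_rhs => rw [← hω.card_rank_le hk, card_filter, Nat.cast_sum]
        simp [Set.indicator_apply]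
    _ = k * P Set.univ := lintegral_const _

lemma Exchangeable.measure_rank_le [IsProbabilityMeasure P] (hexch : Exchangeable P Y)
    (hY : Measurable Y) (hinj : ∀ᵐ ω ∂P, Function.Injective (Y ω)) {k : ℕ}
    (hk : k ≤ Fintype.card ι) (j : ι) :
    P {ω | (Y ω).rank j ≤ k} = k / Fintype.card ι := by
  have hι : Nonempty ι := ⟨j⟩
  rw [ENNReal.eq_div_iff (by simp) (by simp)]
  calc (Fintype.card ι : ℝ≥0∞) * P {ω | (Y ω).rank j ≤ k}
      = ∑ j', P {ω | (Y ω).rank j' ≤ k} := by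
        rw [sum_congr rfl fun j' _ => hexch.measure_rank_le_eq hY j' j k]; simp
    _ = k := by rw [sum_measure_rank_le hY hinj hk, measure_univ, mul_one]

end Exchangeable

theorem split_conformal_coverage_general {m : ℕ}
    {Ω : Type*} [MeasurableSpace Ω] (P : Measure Ω) [IsProbabilityMeasure P]
    (R : Fin m → Ω → ℝ) (R' : Ω → ℝ)
    (hR : ∀ i, Measurable (R i)) (hR' : Measurable R')
    (α : ℝ) (hαm : 1 ≤ α * (m + 1))
    -- exchangeability of the joint vector (R₁, …, R_m, R')
    (hexch : ∀ π : Equiv.Perm (Fin (m + 1)),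
      Measure.map (fun ω => (fun j => (Fin.snoc (fun i => R i ω) (R' ω) : Fin (m+1) → ℝ) (π j))) P =
        Measure.map (fun ω => (Fin.snoc (fun i => R i ω) (R' ω) : Fin (m+1) → ℝ)) P)
    -- the residuals are almost surely pairwise distinct
    (hdist : ∀ᵐ ω ∂P, Function.Injective (Fin.snoc (fun i => R i ω) (R' ω) : Fin (m+1) → ℝ)) :
    ENNReal.ofReal (1 - α) ≤
      P {ω | R' ω ≤ sInf {x : ℝ |
        1 - α ≤ ((univ.filter fun i : Fin m => R i ω ≤ x).card : ℝ) / (m + 1)}} := by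
  set k := ⌈(1 - α) * (m + 1)⌉₊
  let Y : Ω → Fin (m + 1) → ℝ := fun ω => Fin.snoc (fun i => R i ω) (R' ω)
  have hm : (0 : ℝ) < m + 1 := by positivity
  have hkm : k ≤ m := Nat.ceil_le.mpr (by linarith)
  have hexchY : Exchangeable P Y := hexch
  have hY : Measurable Y := measurable_pi_iff.mpr fun j =>
    Fin.lastCases (by simpa [Y] using hR') (fun i => by simpa [Y] using hR i) j
  have hquantile (ω : Ω) : {x | 1 - α ≤ (#{i | R i ω ≤ x} : ℝ) / (m + 1)} =
      {x | k ≤ #{i | R i ω ≤ x}} := by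
    ext x; exact le_div_iff_ceil_mul_le hm _
  calc ENNReal.ofReal (1 - α) ≤ k / (m + 1 : ℕ) := by
        rw [← ENNReal.ofReal_natCast, ← ENNReal.ofReal_natCast,
          ← ENNReal.ofReal_div_of_pos (by positivity)]
        refine ENNReal.ofReal_le_ofReal ((le_div_iff_ceil_mul_le ?_ k).mpr (by simp [k]))
        simpa using hm
    _ = P {ω | (Y ω).rank (Fin.last m) ≤ k} :=
        ((hexchY.measure_rank_le hY hdist (by simp; omega) _).trans (by simp)).symm
    _ ≤ _ := measure_mono fun ω hω => by
        have hrank : #{i | R i ω ≤ R' ω} + 1 ≤ k := (Function.rank_snoc_last _ _).symm.trans_le hω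
        show R' ω ≤ _
        rw [hquantile]
        exact le_csInf_of_card_filter_lt _ (by simpa using hkm) hrank

/-- Split conformal prediction coverage guarantee. Given calibration residuals
`R 1, …, R m` and a test residual `R'` that are jointly exchangeable and almost surely
distinct, the test residual is below the conformal quantile
`q̂ = inf {x : F_∞(x) ≥ 1-α}` (where `F_∞(x) = |{i : R i ≤ x}| / (m+1)`)
with probability at least `1-α`. -/
theorem split_conformal_coverage {m : ℕ}
    {Ω : Type*} [MeasurableSpace Ω] (P : Measure Ω) [IsProbabilityMeasure P]
    (R : Fin m → Ω → ℝ) (R' : Ω → ℝ)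
    (hR : ∀ i, Measurable (R i)) (hR' : Measurable R')
    (α : ℝ) (hα : α ∈ Set.Ioo (0 : ℝ) 1) (hαm : 1 ≤ α * (m + 1))
    -- exchangeability of the joint vector (R₁, …, R_m, R')
    (hexch : ∀ π : Equiv.Perm (Fin (m + 1)),
      Measure.map (fun ω => (fun j => (Fin.snoc (fun i => R i ω) (R' ω) : Fin (m+1) → ℝ) (π j))) P =
        Measure.map (fun ω => (Fin.snoc (fun i => R i ω) (R' ω) : Fin (m+1) → ℝ)) P)
    -- the residuals are almost surely pairwise distinct
    (hdist : ∀ᵐ ω ∂P, Function.Injective (Fin.snoc (fun i => R i ω) (R' ω) : Fin (m+1) → ℝ)) :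
    ENNReal.ofReal (1 - α) ≤
      P {ω | R' ω ≤ sInf {x : ℝ |
        1 - α ≤ ((univ.filter fun i : Fin m => R i ω ≤ x).card : ℝ) / (m + 1)}} :=
  split_conformal_coverage_general P R R' hR hR' α hαm hexch hdist
end

section
/- Consider linear dynamics covariance propagation T(Σ) = A Σ Aᵀ + Q with Q positive semidefinite, a fixed calibration set of points {(μ_i, s_i)}_{i=1}^m in R^n × R^n, and two input covariances Σ₀ ≤ Σ_τ (Loewner order, both positive definite, with T(Σ₀), T(Σ_τ) positive definite). Define residuals R_i = sqrt((s_i - μ'_i)ᵀ T(Σ₀)^{-1} (s_i - μ'_i)) and R'_i = sqrt((s_i - μ'_i)ᵀ T(Σ_τ)^{-1} (s_i - μ'_i)) where μ'_i is the common propagated mean. Then R'_i ≤ R_i for every i, and the conformal (1-α)-quantiles satisfy q̂' ≤ q̂, hence the scaling factors ξ' = q̂'²/χ²_{n,α} and ξ = q̂²/χ²_{n,α} satisfy ξ' ≤ ξ. -/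
/-!
Since `Σ₀ ≤ Σ_τ`, also `T(Σ₀) ≤ T(Σ_τ)`, and matrix inversion reverses the Loewner order on
positive definite matrices, so every Mahalanobis residual can only shrink: `R'ᵢ ≤ Rᵢ`.
Smaller residuals raise the augmented empirical distribution function pointwise, which enlarges
the set whose infimum is the conformal quantile, so `q̂' ≤ q̂`; as `q̂' ≥ 0`, squaring and dividing
by `χ > 0` preserve the inequality.
-/

open Matrix Finset

namespace Matrix

open scoped MatrixOrder

variable {ι κ : Type*} [Fintype ι] [Fintype κ]

lemma mul_mul_transpose_add_le_mul_mul_transpose_add {S S' : Matrix ι ι ℝ} (h : S ≤ S')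
    (A : Matrix κ ι ℝ) (Q : Matrix κ κ ℝ) : A * S * Aᵀ + Q ≤ A * S' * Aᵀ + Q := by
  have h' := (le_iff.mp h).mul_mul_conjTranspose_same A
  rw [conjTranspose_eq_transpose_of_trivial] at h'
  rw [le_iff]
  convert h' using 1
  rw [Matrix.mul_sub, Matrix.sub_mul, add_sub_add_right_eq_sub]

variable [DecidableEq ι]

lemma PosDef.dotProduct_inv_mulVec_le {M N : Matrix ι ι ℝ} (hM : M.PosDef) (hMN : M ≤ N)
    (v : ι → ℝ) : v ⬝ᵥ N⁻¹ *ᵥ v ≤ v ⬝ᵥ M⁻¹ *ᵥ v := by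
  have hN : N.PosDef := by simpa using hM.add_posSemidef (le_iff.mp hMN)
  set z := N⁻¹ *ᵥ v
  set w := M⁻¹ *ᵥ v
  have hNz : N *ᵥ z = v := by
    rw [mulVec_mulVec, mul_nonsing_inv _ hN.det_pos.ne'.isUnit, one_mulVec]
  have hMw : M *ᵥ w = v := by
    rw [mulVec_mulVec, mul_nonsing_inv _ hM.det_pos.ne'.isUnit, one_mulVec]
  have hMsymm : Mᵀ = M := by
    rw [← conjTranspose_eq_transpose_of_trivial]; exact hM.isHermitian.eq
  have hwMz : w ⬝ᵥ M *ᵥ z = z ⬝ᵥ v := by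
    rw [dotProduct_mulVec, ← mulVec_transpose, hMsymm, hMw, dotProduct_comm]
  -- `0 ≤ (w - z)ᵀ M (w - z) = wᵀv - 2 zᵀv + zᵀMz` and `zᵀMz ≤ zᵀNz = zᵀv`.
  have hsq : 0 ≤ (w - z) ⬝ᵥ M *ᵥ (w - z) := by
    simpa using hM.posSemidef.dotProduct_mulVec_nonneg (w - z)
  have hgap : 0 ≤ z ⬝ᵥ (N - M) *ᵥ z := by
    simpa using (le_iff.mp hMN).dotProduct_mulVec_nonneg z
  simp only [mulVec_sub, dotProduct_sub, sub_dotProduct, hMw, hwMz] at hsq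
  rw [sub_mulVec, dotProduct_sub, hNz] at hgap
  rw [dotProduct_comm v z, dotProduct_comm v w]
  linarith

end Matrix

section ConformalQuantile

variable {m : ℕ}

/-- `F_∞(x)`: the atom at `+∞` carries mass `1/(m+1)` but never lies below `x`. -/
noncomputable def augmentedEmpiricalCDF (R : Fin m → ℝ) (x : ℝ) : ℝ :=
  ((univ.filter fun i => R i ≤ x).card : ℝ) / (m + 1)

/-- Unless `α < 1 ≤ α * (m + 1)`, the set is empty or unbounded below and `sInf` returns the
junk value `0`. -/
noncomputable def conformalQuantile (α : ℝ) (R : Fin m → ℝ) : ℝ :=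
  sInf {x | 1 - α ≤ augmentedEmpiricalCDF R x}

lemma augmentedEmpiricalCDF_le_of_le {R R' : Fin m → ℝ} (h : ∀ i, R' i ≤ R i) (x : ℝ) :
    augmentedEmpiricalCDF R x ≤ augmentedEmpiricalCDF R' x := by
  unfold augmentedEmpiricalCDF
  gcongr with i
  exact h i

lemma augmentedEmpiricalCDF_of_forall_le {R : Fin m → ℝ} {x : ℝ} (h : ∀ i, R i ≤ x) :
    augmentedEmpiricalCDF R x = m / (m + 1) := by
  simp [augmentedEmpiricalCDF, h]

lemma exists_le_of_augmentedEmpiricalCDF_pos {R : Fin m → ℝ} {x : ℝ}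
    (h : 0 < augmentedEmpiricalCDF R x) : ∃ i, R i ≤ x := by
  unfold augmentedEmpiricalCDF at h
  obtain ⟨i, hi⟩ := card_pos.mp (Nat.cast_pos.mp ((div_pos_iff_of_pos_right (by positivity)).mp h))
  exact ⟨i, (mem_filter.mp hi).2⟩

lemma bddBelow_setOf_le_augmentedEmpiricalCDF {α : ℝ} (hα : α < 1) (R : Fin m → ℝ) :
    BddBelow {x | 1 - α ≤ augmentedEmpiricalCDF R x} := by
  obtain ⟨b, hb⟩ := (Set.finite_range R).bddBelow
  refine ⟨b, fun x hx => ?_⟩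
  obtain ⟨i, hi⟩ := exists_le_of_augmentedEmpiricalCDF_pos (by linarith [hx.out])
  exact (hb ⟨i, rfl⟩).trans hi

lemma nonempty_setOf_le_augmentedEmpiricalCDF {α : ℝ} (hαm : 1 ≤ α * (m + 1))
    (R : Fin m → ℝ) : {x | 1 - α ≤ augmentedEmpiricalCDF R x}.Nonempty := by
  obtain ⟨b, hb⟩ := (Set.finite_range R).bddAbove
  refine ⟨b, ?_⟩
  rw [Set.mem_ofPred_eq, augmentedEmpiricalCDF_of_forall_le fun i => hb ⟨i, rfl⟩,
    le_div_iff₀ (by positivity)]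
  linarith

lemma conformalQuantile_le_of_le {α : ℝ} (hα : α < 1) (hαm : 1 ≤ α * (m + 1))
    {R R' : Fin m → ℝ} (h : ∀ i, R' i ≤ R i) : conformalQuantile α R' ≤ conformalQuantile α R :=
  csInf_le_csInf (bddBelow_setOf_le_augmentedEmpiricalCDF hα R')
    (nonempty_setOf_le_augmentedEmpiricalCDF hαm R)
    fun x hx => hx.out.trans (augmentedEmpiricalCDF_le_of_le h x)

lemma conformalQuantile_nonneg {α : ℝ} (hα : α < 1) {R : Fin m → ℝ} (h : ∀ i, 0 ≤ R i) :
    0 ≤ conformalQuantile α R :=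
  Real.sInf_nonneg fun x hx => by
    obtain ⟨i, hi⟩ := exists_le_of_augmentedEmpiricalCDF_pos (by linarith [hx.out])
    exact (h i).trans hi

end ConformalQuantile

theorem multistep_scaling_factor_upper_bound_general {n m : ℕ}
    (A Q : Matrix (Fin n) (Fin n) ℝ)
    (S₀ Sτ : Matrix (Fin n) (Fin n) ℝ)
    (hle : (Sτ - S₀).PosSemidef)
    (hT₀ : (A * S₀ * Aᵀ + Q).PosDef)
    (μ' s : Fin m → (Fin n → ℝ))  -- propagated means and true next states
    (R R' : Fin m → ℝ)
    (hR : R = fun i => Real.sqrt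
      ((s i - μ' i) ⬝ᵥ (A * S₀ * Aᵀ + Q)⁻¹.mulVec (s i - μ' i)))
    (hR' : R' = fun i => Real.sqrt
      ((s i - μ' i) ⬝ᵥ (A * Sτ * Aᵀ + Q)⁻¹.mulVec (s i - μ' i)))
    (α : ℝ) (hα : α ∈ Set.Ioo (0 : ℝ) 1) (hαm : 1 ≤ α * (m + 1))
    (qhat qhat' : ℝ)
    (hq : qhat = sInf {x : ℝ |
      1 - α ≤ ((univ.filter fun i : Fin m => R i ≤ x).card : ℝ) / (m + 1)})
    (hq' : qhat' = sInf {x : ℝ |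
      1 - α ≤ ((univ.filter fun i : Fin m => R' i ≤ x).card : ℝ) / (m + 1)})
    (χ : ℝ) (hχ : 0 < χ)  -- the (1-α)-quantile of the chi-squared distribution
    (ξ ξ' : ℝ) (hξ : ξ = qhat ^ 2 / χ) (hξ' : ξ' = qhat' ^ 2 / χ) :
    (∀ i, R' i ≤ R i) ∧ qhat' ≤ qhat ∧ ξ' ≤ ξ := by
  have hres : ∀ i, R' i ≤ R i := fun i => by
    subst hR hR'
    exact Real.sqrt_le_sqrt <| hT₀.dotProduct_inv_mulVec_le
      (mul_mul_transpose_add_le_mul_mul_transpose_add hle A Q) _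
  have hquant : qhat' ≤ qhat := by
    rw [hq, hq']
    exact conformalQuantile_le_of_le hα.2 hαm hres
  have hq'_nonneg : 0 ≤ qhat' := by
    rw [hq']
    exact conformalQuantile_nonneg hα.2 fun i => hR' ▸ Real.sqrt_nonneg _
  refine ⟨hres, hquant, ?_⟩
  rw [hξ, hξ']
  gcongr

/-- Multi-step scaling factor upper bound for linear dynamics. With covariance
propagation `T(Σ) = A Σ Aᵀ + Q` (`Q` PSD) and input covariances `Σ₀ ≤ Σ_τ` (Loewner
order), the residuals computed with `T(Σ_τ)` are dominated by those computed with
`T(Σ₀)`, hence the conformal `(1-α)`-quantiles satisfy `q̂' ≤ q̂` and the scaling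
factors satisfy `ξ' ≤ ξ`. -/
theorem multistep_scaling_factor_upper_bound {n m : ℕ}
    (A Q : Matrix (Fin n) (Fin n) ℝ) (hQ : Q.PosSemidef)
    (S₀ Sτ : Matrix (Fin n) (Fin n) ℝ) (hS₀ : S₀.PosDef) (hSτ : Sτ.PosDef)
    (hle : (Sτ - S₀).PosSemidef)
    (hT₀ : (A * S₀ * Aᵀ + Q).PosDef) (hTτ : (A * Sτ * Aᵀ + Q).PosDef)
    (μ' s : Fin m → (Fin n → ℝ))  -- propagated means and true next states
    (R R' : Fin m → ℝ)
    (hR : R = fun i => Real.sqrt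
      ((s i - μ' i) ⬝ᵥ (A * S₀ * Aᵀ + Q)⁻¹.mulVec (s i - μ' i)))
    (hR' : R' = fun i => Real.sqrt
      ((s i - μ' i) ⬝ᵥ (A * Sτ * Aᵀ + Q)⁻¹.mulVec (s i - μ' i)))
    (α : ℝ) (hα : α ∈ Set.Ioo (0 : ℝ) 1) (hαm : 1 ≤ α * (m + 1))
    (qhat qhat' : ℝ)
    (hq : qhat = sInf {x : ℝ |
      1 - α ≤ ((univ.filter fun i : Fin m => R i ≤ x).card : ℝ) / (m + 1)})
    (hq' : qhat' = sInf {x : ℝ |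
      1 - α ≤ ((univ.filter fun i : Fin m => R' i ≤ x).card : ℝ) / (m + 1)})
    (χ : ℝ) (hχ : 0 < χ)  -- the (1-α)-quantile of the chi-squared distribution
    (ξ ξ' : ℝ) (hξ : ξ = qhat ^ 2 / χ) (hξ' : ξ' = qhat' ^ 2 / χ) :
    (∀ i, R' i ≤ R i) ∧ qhat' ≤ qhat ∧ ξ' ≤ ξ :=
  multistep_scaling_factor_upper_bound_general A Q S₀ Sτ hle hT₀ μ' s R R' hR hR' α hα hαm qhat
    qhat' hq hq' χ hχ ξ ξ' hξ hξ'
end
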